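/- Fix u ∈ ℝ and δ > 0, and define f(x,y) = ((u²+1)y)/((x-u)² + y²) for x ∈ ℝ, y > 0. Then for every integer ℓ ≥ 0, the differential operator D = iy·∂/∂x + y·∂/∂y applied to g_ℓ(x,y) := f(x,y)^δ · (((x-u)-iy)/((x-u)+iy))^ℓ yields D g_ℓ = δ · f^δ · (((x-u)-iy)/((x-u)+iy))^{ℓ+1} + ℓ · f^δ · (((x-u)-iy)/((x-u)+iy))^ℓ · (-2iy/((x-u)+iy)). -/

import Mathlib

noncomputable def poissonKer (u x y : ℝ) : ℝ := ((u ^ 2 + 1) * y) / ((x - u) ^ 2 + y ^ 2)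

noncomputable def qFactor (u x y : ℝ) : ℂ :=
  (((x : ℂ) - u) - Complex.I * y) / (((x : ℂ) - u) + Complex.I * y)

noncomputable def gFun (u δ : ℝ) (ℓ : ℕ) (x y : ℝ) : ℂ :=
  ((poissonKer u x y ^ δ : ℝ) : ℂ) * qFactor u x y ^ ℓ

/-! With `w = (x - u) + i y`, the operator `D = i y ∂ₓ + y ∂_y` equals `2 i y ∂/∂w`: it is a
derivation that kills `w̄` and sends `w` to `2 i y`. Hence `D q = q · (-2 i y / w)` for `q = w̄ / w`
and, since `y = (w - w̄) / 2i`, also `D f = f · q`. The formula then follows from the Leibniz and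
chain rules for `D` applied to `f ^ δ · q ^ ℓ`. -/

open Complex

noncomputable def raisingOp (F : ℝ → ℝ → ℂ) (x y : ℝ) : ℂ :=
  I * y * deriv (fun x' => F x' y) x + y * deriv (fun y' => F x y') y

theorem deriv_ofReal_comp (f : ℝ → ℝ) (x : ℝ) : deriv (fun t => (f t : ℂ)) x = deriv f x := by
  by_cases hf : DifferentiableAt ℝ f x
  · exact hf.hasDerivAt.ofReal_comp.deriv
  · have hf' : ¬ DifferentiableAt ℝ (fun t => (f t : ℂ)) x := fun h =>
      hf (by simpa [Function.comp_def] using reCLM.differentiableAt.comp x h)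
    rw [deriv_zero_of_not_differentiableAt hf', deriv_zero_of_not_differentiableAt hf, ofReal_zero]

section RaisingOp

variable {F G : ℝ → ℝ → ℂ} {x y : ℝ}

theorem raisingOp_eq_of_hasDerivAt {a b : ℂ} (ha : HasDerivAt (fun x' => F x' y) a x)
    (hb : HasDerivAt (fun y' => F x y') b y) : raisingOp F x y = I * y * a + y * b := by
  rw [raisingOp, ha.deriv, hb.deriv]

theorem raisingOp_mul (hFx : DifferentiableAt ℝ (fun x' => F x' y) x)
    (hFy : DifferentiableAt ℝ (fun y' => F x y') y) (hGx : DifferentiableAt ℝ (fun x' => G x' y) x)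
    (hGy : DifferentiableAt ℝ (fun y' => G x y') y) :
    raisingOp (fun x y => F x y * G x y) x y =
      raisingOp F x y * G x y + F x y * raisingOp G x y := by
  simp only [raisingOp]
  rw [deriv_fun_mul hFx hGx, deriv_fun_mul hFy hGy]
  ring

theorem raisingOp_pow (hFx : DifferentiableAt ℝ (fun x' => F x' y) x)
    (hFy : DifferentiableAt ℝ (fun y' => F x y') y) (n : ℕ) :
    raisingOp (fun x y => F x y ^ n) x y = n * F x y ^ (n - 1) * raisingOp F x y := by
  simp only [raisingOp]
  rw [deriv_fun_pow hFx, deriv_fun_pow hFy]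
  ring

theorem raisingOp_ofReal_rpow {P : ℝ → ℝ → ℝ} (hPx : DifferentiableAt ℝ (fun x' => P x' y) x)
    (hPy : DifferentiableAt ℝ (fun y' => P x y') y) (hP : P x y ≠ 0) (δ : ℝ) :
    raisingOp (fun x y => ((P x y ^ δ : ℝ) : ℂ)) x y =
      δ * ((P x y ^ (δ - 1) : ℝ) : ℂ) * raisingOp (fun x y => (P x y : ℂ)) x y := by
  simp only [raisingOp, deriv_ofReal_comp]
  rw [deriv_rpow_const hPx (.inl hP), deriv_rpow_const hPy (.inl hP)]
  push_cast
  ring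

end RaisingOp

section PoissonKernel

variable (u x : ℝ) {y : ℝ}

theorem sub_add_I_mul_ne_zero (hy : y ≠ 0) : (x : ℂ) - u + I * y ≠ 0 := by
  intro h
  simpa [hy] using congrArg im h

theorem hasDerivAt_poissonKer_fst (hy : y ≠ 0) :
    HasDerivAt (fun x' => poissonKer u x' y)
      (-((u ^ 2 + 1) * y * (2 * (x - u))) / ((x - u) ^ 2 + y ^ 2) ^ 2) x := by
  have hd : (x - u) ^ 2 + y ^ 2 ≠ 0 := by positivity
  have h := (hasDerivAt_const x ((u ^ 2 + 1) * y)).div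
    ((((hasDerivAt_id x).sub_const u).pow 2).add_const (y ^ 2)) hd
  simpa [poissonKer, Pi.div_def] using h

theorem hasDerivAt_poissonKer_snd (hy : y ≠ 0) :
    HasDerivAt (fun y' => poissonKer u x y')
      (((u ^ 2 + 1) * ((x - u) ^ 2 + y ^ 2) - (u ^ 2 + 1) * y * (2 * y)) /
        ((x - u) ^ 2 + y ^ 2) ^ 2) y := by
  have hd : (x - u) ^ 2 + y ^ 2 ≠ 0 := by positivity
  have h := ((hasDerivAt_id y).const_mul (u ^ 2 + 1)).div
    (((hasDerivAt_id y).pow 2).const_add ((x - u) ^ 2)) hd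
  simpa [poissonKer, Pi.div_def] using h

theorem poissonKer_ne_zero (hy : y ≠ 0) : poissonKer u x y ≠ 0 :=
  div_ne_zero (mul_ne_zero (by positivity) hy) (by positivity)

theorem hasDerivAt_qFactor_fst (hy : y ≠ 0) :
    HasDerivAt (fun x' => qFactor u x' y) (2 * I * y / ((x : ℂ) - u + I * y) ^ 2) x := by
  have hX : HasDerivAt (fun x' : ℝ => (x' : ℂ)) 1 x := by
    simpa using (hasDerivAt_id x).ofReal_comp
  exact ((hX.sub_const _).sub_const _).div ((hX.sub_const _).add_const _)
    (sub_add_I_mul_ne_zero u x hy) |>.congr_deriv (by ring)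

theorem hasDerivAt_qFactor_snd (hy : y ≠ 0) :
    HasDerivAt (fun y' => qFactor u x y') (-2 * I * (x - u) / ((x : ℂ) - u + I * y) ^ 2) y := by
  have hIY : HasDerivAt (fun y' : ℝ => I * y') I y := by
    simpa using ((hasDerivAt_id y).ofReal_comp).const_mul I
  exact (hIY.const_sub _).div (hIY.const_add _) (sub_add_I_mul_ne_zero u x hy)
    |>.congr_deriv (by ring)

theorem raisingOp_ofReal_poissonKer (hy : y ≠ 0) :
    raisingOp (fun x y => (poissonKer u x y : ℂ)) x y = poissonKer u x y * qFactor u x y := by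
  rw [raisingOp_eq_of_hasDerivAt (F := fun x y => (poissonKer u x y : ℂ))
    (hasDerivAt_poissonKer_fst u x hy).ofReal_comp
    (hasDerivAt_poissonKer_snd u x hy).ofReal_comp, poissonKer, qFactor]
  have hw := sub_add_I_mul_ne_zero u x hy
  have hd : ((x : ℂ) - u) ^ 2 + y ^ 2 ≠ 0 := by
    exact_mod_cast (by positivity : (x - u) ^ 2 + y ^ 2 ≠ 0)
  push_cast
  field_simp
  ring_nf
  simp only [I_sq]
  ring

theorem raisingOp_qFactor (hy : y ≠ 0) :
    raisingOp (qFactor u) x y = qFactor u x y * (-2 * I * y / ((x : ℂ) - u + I * y)) := by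
  rw [raisingOp_eq_of_hasDerivAt (hasDerivAt_qFactor_fst u x hy) (hasDerivAt_qFactor_snd u x hy),
    qFactor]
  have hw := sub_add_I_mul_ne_zero u x hy
  field_simp
  ring

end PoissonKernel

theorem raising_operator_formula_general (u δ : ℝ) (ℓ : ℕ) (x y : ℝ) (hy : 0 < y) :
    Complex.I * (y : ℂ) * deriv (fun x' : ℝ => gFun u δ ℓ x' y) x +
      (y : ℂ) * deriv (fun y' : ℝ => gFun u δ ℓ x y') y =
    (δ : ℂ) * ((poissonKer u x y ^ δ : ℝ) : ℂ) * qFactor u x y ^ (ℓ + 1) +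
      (ℓ : ℂ) * ((poissonKer u x y ^ δ : ℝ) : ℂ) * qFactor u x y ^ ℓ *
        (-2 * Complex.I * y / (((x : ℂ) - u) + Complex.I * y)) := by
  have hy0 := hy.ne'
  have hP := poissonKer_ne_zero u x hy0
  have hPx := (hasDerivAt_poissonKer_fst u x hy0).differentiableAt
  have hPy := (hasDerivAt_poissonKer_snd u x hy0).differentiableAt
  have hqx := (hasDerivAt_qFactor_fst u x hy0).differentiableAt
  have hqy := (hasDerivAt_qFactor_snd u x hy0).differentiableAt
  change raisingOp (fun x y => ((poissonKer u x y ^ δ : ℝ) : ℂ) * qFactor u x y ^ ℓ) x y = _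
  rw [raisingOp_mul (by fun_prop (disch := exact hP)) (by fun_prop (disch := exact hP))
      (by fun_prop) (by fun_prop),
    raisingOp_ofReal_rpow hPx hPy hP, raisingOp_pow hqx hqy, raisingOp_ofReal_poissonKer u x hy0,
    raisingOp_qFactor u x hy0]
  have hPδ : ((poissonKer u x y ^ (δ - 1) : ℝ) : ℂ) * poissonKer u x y =
      ((poissonKer u x y ^ δ : ℝ) : ℂ) := by
    rw [← ofReal_mul, Real.rpow_sub_one hP, div_mul_cancel₀ _ hP]
  have hqℓ : (ℓ : ℂ) * qFactor u x y ^ (ℓ - 1) * qFactor u x y = ℓ * qFactor u x y ^ ℓ := by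
    obtain rfl | hℓ := eq_or_ne ℓ 0
    · simp
    · rw [mul_assoc, pow_sub_one_mul hℓ]
  linear_combination (δ * qFactor u x y ^ (ℓ + 1)) * hPδ +
    ((poissonKer u x y ^ δ : ℝ) * (-2 * I * y / ((x : ℂ) - u + I * y))) * hqℓ

theorem raising_operator_formula (u δ : ℝ) (hδ : 0 < δ) (ℓ : ℕ) (x y : ℝ) (hy : 0 < y) :
    Complex.I * (y : ℂ) * deriv (fun x' : ℝ => gFun u δ ℓ x' y) x +
      (y : ℂ) * deriv (fun y' : ℝ => gFun u δ ℓ x y') y =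
    (δ : ℂ) * ((poissonKer u x y ^ δ : ℝ) : ℂ) * qFactor u x y ^ (ℓ + 1) +
      (ℓ : ℂ) * ((poissonKer u x y ^ δ : ℝ) : ℂ) * qFactor u x y ^ ℓ *
        (-2 * Complex.I * y / (((x : ℂ) - u) + Complex.I * y)) :=
  raising_operator_formula_general u δ ℓ x y hy
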